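/- For the Gauss map, the pressure of −log|T′| equals 0: the limit lim_{n→∞} (1/n) log ( Σ_{(i_1,…,i_n)∈ℕ^n} |(T^n)′(z_{i_1…i_n})|^{−1} ) exists and equals 0, where z_{i_1…i_n} = Π((i_1…i_n)^∞) denotes the period-n periodic point of T whose continued fraction expansion is the infinite repetition of (i_1,…,i_n). -/

import Mathlib

open MeasureTheory Filter Set
open scoped ENNReal

instance : MeasurableSpace ℕ+ := ⊤

/-- The Gauss map `T x = 1/x - ⌊1/x⌋` (with `T 0 = 0`). -/
noncomputable def gaussMap (x : ℝ) : ℝ := if x = 0 then 0 else Int.fract x⁻¹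

/-- Finite continued fraction approximants: `cfApprox n a` is the value of the
continued fraction `1/(a 0 + 1/(a 1 + ⋯))` truncated after `n` levels. -/
noncomputable def cfApprox : ℕ → (ℕ → ℕ+) → ℝ
  | 0, _ => 0
  | n + 1, a => (((a 0 : ℕ) : ℝ) + cfApprox n (fun k => a (k + 1)))⁻¹

/-- The continued fraction coding map `Π : ℕ^ℕ → [0,1] ∖ ℚ`. -/
noncomputable def cfVal (a : ℕ → ℕ+) : ℝ := limUnder atTop (fun n => cfApprox n a)

/-- `p` is a countable probability vector `(p_n)_{n ≥ 1}`. -/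
def IsProbVec (p : ℕ+ → ℝ) : Prop := (∀ n, 0 ≤ p n) ∧ HasSum p 1

/-- `m` is the Bernoulli product measure on `ℕ^ℕ` with weights `p`:
it assigns to each cylinder the product of the weights of its digits. -/
def IsBernoulli (p : ℕ+ → ℝ) (m : Measure (ℕ → ℕ+)) : Prop :=
  ∀ (n : ℕ) (i : ℕ → ℕ+),
    m {a | ∀ k < n, a k = i k} = ENNReal.ofReal (∏ k ∈ Finset.range n, p (i k))

/-- Hausdorff dimension of a measure: `inf { dim_H A : μ A = 1 }`. -/
noncomputable def dimMeasure (μ : Measure ℝ) : ℝ≥0∞ :=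
  ⨅ (A : Set ℝ) (_ : μ A = 1), dimH A


/-- The periodic extension `(i_1 … i_n)^∞` of a finite word. -/
def perExt (n : ℕ) (i : Fin n → ℕ+) : ℕ → ℕ+ :=
  if h : 0 < n then fun k => i ⟨k % n, Nat.mod_lt k h⟩ else fun _ => 1

/-!
For a word `w = (a₁, …, aₙ)` the inverse branch `t ↦ 1/(a₁ + 1/(⋯ + 1/(aₙ + t)))` of `Tⁿ` is the
Möbius map of the matrix `∏ᵢ !![0, 1; 1, aᵢ]`, of determinant `±1`. If `(q', q)` is its bottom row,
the branch has derivative `±(q' t + q)⁻²`, so the periodic point `z_w` has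
`|(Tⁿ)'(z_w)|⁻¹ = (q' z_w + q)⁻²`; since `0 ≤ z_w ≤ 1` and `q' ≤ q`, this is within a factor `2` of
the length `(q (q' + q))⁻¹` of the cylinder of `w`. Appending a digit `p` to `w` gives the
denominators `(q, q' + p q)`, so the cylinder lengths of the words `w p` telescope to that of `w`,
and the cylinders of each length `n` have total length `1`. Hence the sums in the statement lie in
`[1/2, 2]`, and their logarithms are `o(n)`.
-/

open Topology

lemma hasSum_sub_succ_of_antitone {u : ℕ → ℝ} (hu : Antitone u) (h : Tendsto u atTop (𝓝 0)) :
    HasSum (fun n => u n - u (n + 1)) (u 0) := by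
  rw [hasSum_iff_tendsto_nat_of_nonneg (fun n => sub_nonneg.2 (hu n.le_succ))]
  simp only [Finset.sum_range_sub']
  simpa using (tendsto_const_nhds (x := u 0)).sub h

lemma hasSum_prod_of_nonneg {α β : Type*} {f : α × β → ℝ} {g : α → ℝ} {a : ℝ} (hf : 0 ≤ f)
    (hfg : ∀ x, HasSum (fun y => f (x, y)) (g x)) (hg : HasSum g a) : HasSum f a := by
  have hs : Summable f := (summable_prod_of_nonneg hf).2
    ⟨fun x => (hfg x).summable, by simpa only [fun x => (hfg x).tsum_eq] using hg.summable⟩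
  exact hg.unique (hs.hasSum.prod_fiberwise hfg) ▸ hs.hasSum

lemma hasSum_inv_mul_add_mul {C D : ℝ} (hC : 0 ≤ C) (hD : 0 < D) :
    HasSum (fun p : ℕ+ => ((C + p * D) * (C + (p + 1) * D))⁻¹) (D * (C + D))⁻¹ := by
  set u : ℕ → ℝ := fun N => (D * (C + (N + 1) * D))⁻¹
  have hu : Antitone u := fun m n hmn => inv_anti₀ (by positivity) (by gcongr)
  have hlim : Tendsto u atTop (𝓝 0) := by
    refine tendsto_inv_atTop_zero.comp (Tendsto.const_mul_atTop hD ?_)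
    refine tendsto_atTop_add_const_left _ C (Tendsto.atTop_mul_const hD ?_)
    exact tendsto_atTop_add_const_right _ 1 tendsto_natCast_atTop_atTop
  have hterm : ∀ N : ℕ, u N - u (N + 1) =
      ((C + N.succPNat * D) * (C + (N.succPNat + 1) * D))⁻¹ := by
    intro N
    have : 0 < C + (N + 1) * D := by positivity
    simp only [u, Nat.succPNat_coe, Nat.cast_succ]
    field_simp
    ring
  rw [← Equiv.pnatEquivNat.symm.hasSum_iff]
  convert hasSum_sub_succ_of_antitone hu hlim using 1
  · ext N
    exact (hterm N).symm
  · simp [u]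

lemma inv_le_two_mul_inv_of_le {x y : ℝ} (hy : 0 < y) (h : y ≤ 2 * x) : x⁻¹ ≤ 2 * y⁻¹ := by
  rw [← div_eq_mul_inv, le_div_iff₀ hy, inv_mul_le_iff₀ (by linarith)]
  linarith

lemma tsum_mem_Icc_of_hasSum_one {ι : Type*} {f g : ι → ℝ} {c : ℝ} (hc : 0 < c)
    (hg : HasSum g 1) (hf : 0 ≤ f) (hfg : ∀ i, f i ≤ c * g i) (hgf : ∀ i, g i ≤ c * f i) :
    ∑' i, f i ∈ Icc c⁻¹ c := by
  have hcg : HasSum (fun i => c * g i) c := by simpa using hg.mul_left c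
  have hf_sum : Summable f := hcg.summable.of_nonneg_of_le hf hfg
  refine ⟨?_, (hf_sum.tsum_le_tsum hfg hcg.summable).trans hcg.tsum_eq.le⟩
  rw [inv_le_iff_one_le_mul₀' hc, ← hg.tsum_eq, ← tsum_mul_left]
  exact hg.summable.tsum_le_tsum hgf (hf_sum.mul_left c)

lemma tendsto_inv_mul_log_of_mem_Icc {u : ℕ → ℝ} {a b : ℝ} (ha : 0 < a)
    (hu : ∀ᶠ n in atTop, u n ∈ Icc a b) :
    Tendsto (fun n : ℕ => (n : ℝ)⁻¹ * Real.log (u n)) atTop (𝓝 0) := by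
  refine (tendsto_inv_atTop_zero.comp tendsto_natCast_atTop_atTop).zero_mul_isBoundedUnder_le ?_
  refine isBoundedUnder_of_eventually_le (a := max |Real.log a| |Real.log b|) ?_
  filter_upwards [hu] with n ⟨han, hnb⟩
  exact abs_le_max_abs_abs (Real.log_le_log ha han) (Real.log_le_log (ha.trans_le han) hnb)

noncomputable def cfMap : List ℕ+ → ℝ → ℝ
  | [], t => t
  | a :: w, t => ((a : ℝ) + cfMap w t)⁻¹

@[simp] lemma cfMap_nil (t : ℝ) : cfMap [] t = t := rfl

@[simp] lemma cfMap_cons (a : ℕ+) (w : List ℕ+) (t : ℝ) :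
    cfMap (a :: w) t = ((a : ℝ) + cfMap w t)⁻¹ := rfl

lemma cfMap_append (v w : List ℕ+) (t : ℝ) : cfMap (v ++ w) t = cfMap v (cfMap w t) := by
  induction v with
  | nil => rfl
  | cons a v ih => simp [ih]

noncomputable def cfMatrix (w : List ℕ+) : Matrix (Fin 2) (Fin 2) ℝ :=
  (w.map fun a => !![0, 1; 1, (a : ℝ)]).prod

lemma cfMatrix_cons (a : ℕ+) (w : List ℕ+) :
    cfMatrix (a :: w) = !![0, 1; 1, (a : ℝ)] * cfMatrix w := by
  simp [cfMatrix]

lemma cfMatrix_append_singleton (w : List ℕ+) (p : ℕ+) :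
    cfMatrix (w ++ [p]) = cfMatrix w * !![0, 1; 1, (p : ℝ)] := by
  simp [cfMatrix]

@[simp] lemma cfMatrix_cons_apply_zero (a : ℕ+) (w : List ℕ+) (j : Fin 2) :
    cfMatrix (a :: w) 0 j = cfMatrix w 1 j := by
  simp [cfMatrix_cons, Matrix.mul_apply, Fin.sum_univ_two]

@[simp] lemma cfMatrix_cons_apply_one (a : ℕ+) (w : List ℕ+) (j : Fin 2) :
    cfMatrix (a :: w) 1 j = cfMatrix w 0 j + a * cfMatrix w 1 j := by
  simp [cfMatrix_cons, Matrix.mul_apply, Fin.sum_univ_two]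

@[simp] lemma cfMatrix_append_singleton_apply_zero (w : List ℕ+) (p : ℕ+) (i : Fin 2) :
    cfMatrix (w ++ [p]) i 0 = cfMatrix w i 1 := by
  simp [cfMatrix_append_singleton, Matrix.mul_apply, Fin.sum_univ_two]

@[simp] lemma cfMatrix_append_singleton_apply_one (w : List ℕ+) (p : ℕ+) (i : Fin 2) :
    cfMatrix (w ++ [p]) i 1 = cfMatrix w i 0 + p * cfMatrix w i 1 := by
  simp [cfMatrix_append_singleton, Matrix.mul_apply, Fin.sum_univ_two, mul_comm]

lemma det_cfMatrix (w : List ℕ+) : (cfMatrix w).det = (-1) ^ w.length := by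
  induction w with
  | nil => simp [cfMatrix]
  | cons a w ih =>
    rw [cfMatrix_cons, Matrix.det_mul, Matrix.det_fin_two_of, ih, List.length_cons, pow_succ]
    ring

lemma cfMatrix_nonneg (w : List ℕ+) (i j : Fin 2) : 0 ≤ cfMatrix w i j := by
  induction w using List.reverseRecOn generalizing j with
  | nil => fin_cases i <;> fin_cases j <;> simp [cfMatrix]
  | append_singleton w p ih =>
    fin_cases j
    · simpa using ih 1
    · simpa using add_nonneg (ih 0) (mul_nonneg (by positivity) (ih 1))

lemma one_le_cfMatrix_one_one (w : List ℕ+) : 1 ≤ cfMatrix w 1 1 := by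
  induction w using List.reverseRecOn with
  | nil => simp [cfMatrix]
  | append_singleton w p ih =>
    have hp : (1 : ℝ) ≤ p := Nat.one_le_cast.mpr p.pos
    simp only [cfMatrix_append_singleton_apply_one]
    nlinarith [cfMatrix_nonneg w 1 0]

lemma cfMatrix_one_zero_le_one_one (w : List ℕ+) : cfMatrix w 1 0 ≤ cfMatrix w 1 1 := by
  induction w using List.reverseRecOn with
  | nil => simp [cfMatrix]
  | append_singleton w p ih =>
    have hp : (1 : ℝ) ≤ p := Nat.one_le_cast.mpr p.pos
    simp only [cfMatrix_append_singleton_apply_zero, cfMatrix_append_singleton_apply_one]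
    nlinarith [cfMatrix_nonneg w 1 0, cfMatrix_nonneg w 1 1]

/-- `|(cfMap w)'(t)| = (cfDenom w t)⁻²`. -/
noncomputable def cfDenom (w : List ℕ+) (t : ℝ) : ℝ := cfMatrix w 1 0 * t + cfMatrix w 1 1

lemma cfDenom_pos (w : List ℕ+) {t : ℝ} (ht : 0 ≤ t) : 0 < cfDenom w t := by
  unfold cfDenom
  nlinarith [cfMatrix_nonneg w 1 0, one_le_cfMatrix_one_one w]

lemma cfDenom_mono (w : List ℕ+) {s t : ℝ} (hst : s ≤ t) : cfDenom w s ≤ cfDenom w t := by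
  unfold cfDenom
  nlinarith [cfMatrix_nonneg w 1 0]

lemma cfDenom_one_le_two_mul (w : List ℕ+) : cfDenom w 1 ≤ 2 * cfDenom w 0 := by
  unfold cfDenom
  linarith [cfMatrix_one_zero_le_one_one w]

lemma cfDenom_append_singleton (w : List ℕ+) (p : ℕ+) (t : ℝ) :
    cfDenom (w ++ [p]) t = cfMatrix w 1 0 + (p + t) * cfMatrix w 1 1 := by
  simp only [cfDenom, cfMatrix_append_singleton_apply_zero, cfMatrix_append_singleton_apply_one]
  ring

lemma cfMap_eq_div (w : List ℕ+) {t : ℝ} (ht : 0 ≤ t) :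
    cfMap w t = (cfMatrix w 0 0 * t + cfMatrix w 0 1) / cfDenom w t := by
  induction w with
  | nil => simp [cfMatrix, cfDenom]
  | cons a w ih =>
    have hq := cfDenom_pos w ht
    rw [cfMap_cons, ih, add_div' _ _ _ hq.ne', inv_div]
    simp only [cfDenom, cfMatrix_cons_apply_zero, cfMatrix_cons_apply_one]
    congr 1
    ring

lemma abs_cfMap_sub (w : List ℕ+) {s t : ℝ} (hs : 0 ≤ s) (ht : 0 ≤ t) :
    |cfMap w s - cfMap w t| = |s - t| / (cfDenom w s * cfDenom w t) := by
  have hqs := cfDenom_pos w hs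
  have hqt := cfDenom_pos w ht
  have hdet : cfMatrix w 0 0 * cfMatrix w 1 1 - cfMatrix w 0 1 * cfMatrix w 1 0 =
      (-1) ^ w.length := by
    rw [← det_cfMatrix, Matrix.det_fin_two]
  have hsub : cfMap w s - cfMap w t = (-1) ^ w.length * (s - t) / (cfDenom w s * cfDenom w t) := by
    rw [cfMap_eq_div w hs, cfMap_eq_div w ht, div_sub_div _ _ hqs.ne' hqt.ne', ← hdet]
    unfold cfDenom
    ring
  rw [hsub, abs_div, abs_mul, abs_pow, abs_neg, abs_one, one_pow, one_mul,
    abs_of_pos (mul_pos hqs hqt)]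

lemma cfMap_nonneg (w : List ℕ+) {t : ℝ} (ht : 0 ≤ t) : 0 ≤ cfMap w t := by
  rw [cfMap_eq_div w ht]
  exact div_nonneg (add_nonneg (mul_nonneg (cfMatrix_nonneg w 0 0) ht) (cfMatrix_nonneg w 0 1))
    (cfDenom_pos w ht).le

/-- `cfMap w '' [0, 1]` is the cylinder of the points whose expansion begins with `w`. -/
noncomputable def cylinderLength (w : List ℕ+) : ℝ := |cfMap w 1 - cfMap w 0|

lemma cylinderLength_eq (w : List ℕ+) : cylinderLength w = (cfDenom w 0 * cfDenom w 1)⁻¹ := by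
  rw [cylinderLength, abs_cfMap_sub w zero_le_one le_rfl, mul_comm]
  norm_num

lemma abs_cfMap_sub_cfMap_zero_le (w : List ℕ+) {x : ℝ} (hx₀ : 0 ≤ x) (hx₁ : x ≤ 1) :
    |cfMap w x - cfMap w 0| ≤ cylinderLength w := by
  have hq₀ := cfDenom_pos w le_rfl
  have hqx := cfDenom_pos w hx₀
  have hq₁ := cfDenom_pos w zero_le_one
  rw [abs_cfMap_sub w hx₀ le_rfl, cylinderLength_eq, sub_zero, abs_of_nonneg hx₀,
    div_le_iff₀ (by positivity), inv_mul_eq_div, le_div_iff₀ (by positivity)]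
  have : x * cfDenom w 1 ≤ cfDenom w x := by
    unfold cfDenom
    nlinarith [one_le_cfMatrix_one_one w]
  nlinarith

lemma two_pow_le_cfDenom_mul (w : List ℕ+) : 2 ^ w.length ≤ cfDenom w 0 * cfDenom w 1 := by
  induction w using List.reverseRecOn with
  | nil => simp [cfDenom, cfMatrix]
  | append_singleton w p ih =>
    have hp : (1 : ℝ) ≤ p := Nat.one_le_cast.mpr p.pos
    have hC := cfMatrix_nonneg w 1 0
    have hD := one_le_cfMatrix_one_one w
    simp only [cfDenom_append_singleton, List.length_append, List.length_singleton, pow_succ]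
    simp only [cfDenom] at ih
    nlinarith [mul_nonneg (sub_nonneg.2 hp) hC, mul_nonneg (sub_nonneg.2 hp) (zero_le_one.trans hD)]

lemma cylinderLength_le (w : List ℕ+) : cylinderLength w ≤ 2⁻¹ ^ w.length := by
  rw [cylinderLength_eq, inv_pow]
  exact inv_anti₀ (by positivity) (two_pow_le_cfDenom_mul w)

lemma hasSum_cylinderLength_append_singleton (w : List ℕ+) :
    HasSum (fun p : ℕ+ => cylinderLength (w ++ [p])) (cylinderLength w) := by
  convert hasSum_inv_mul_add_mul (cfMatrix_nonneg w 1 0)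
    (zero_lt_one.trans_le (one_le_cfMatrix_one_one w)) using 1
  · ext p
    rw [cylinderLength_eq, cfDenom_append_singleton, cfDenom_append_singleton, add_zero]
  · simp only [cylinderLength_eq, cfDenom, mul_zero, zero_add, mul_one]

lemma hasSum_cylinderLength (n : ℕ) :
    HasSum (fun i : Fin n → ℕ+ => cylinderLength (List.ofFn i)) 1 := by
  induction n with
  | zero => simp [cylinderLength]
  | succ n ih =>
    rw [← ((Equiv.prodComm _ _).trans (Fin.snocEquiv fun _ => ℕ+)).hasSum_iff]
    refine hasSum_prod_of_nonneg (fun _ => abs_nonneg _) (fun i => ?_) ih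
    simpa only [Function.comp_apply, Equiv.trans_apply, Equiv.prodComm_apply, Prod.swap_prod_mk,
      Fin.snocEquiv_apply, List.ofFn_succ_last, Fin.snoc_castSucc, Fin.snoc_last]
      using hasSum_cylinderLength_append_singleton (List.ofFn i)

lemma inv_cfDenom_sq_le (w : List ℕ+) {z : ℝ} (hz : 0 ≤ z) :
    (cfDenom w z ^ 2)⁻¹ ≤ 2 * cylinderLength w := by
  have hq₀ := cfDenom_pos w le_rfl
  have hq₀z := cfDenom_mono w hz
  rw [cylinderLength_eq]
  refine inv_le_two_mul_inv_of_le (mul_pos hq₀ (cfDenom_pos w zero_le_one)) ?_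
  nlinarith [cfDenom_one_le_two_mul w]

lemma cylinderLength_le_inv_cfDenom_sq (w : List ℕ+) {z : ℝ} (hz₀ : 0 ≤ z) (hz₁ : z ≤ 1) :
    cylinderLength w ≤ 2 * (cfDenom w z ^ 2)⁻¹ := by
  have hqz := cfDenom_pos w hz₀
  have hqz₁ := cfDenom_mono w hz₁
  rw [cylinderLength_eq]
  refine inv_le_two_mul_inv_of_le (pow_pos hqz 2) ?_
  nlinarith [cfDenom_one_le_two_mul w]

lemma inv_cfDenom_mul_cfMap_cons (a : ℕ+) (w : List ℕ+) {t : ℝ} (ht : 0 ≤ t) :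
    (cfDenom w t)⁻¹ * cfMap (a :: w) t = (cfDenom (a :: w) t)⁻¹ := by
  have hq := cfDenom_pos w ht
  rw [cfMap_cons, cfMap_eq_div w ht, add_div' _ _ _ hq.ne', inv_div, div_eq_mul_inv,
    inv_mul_cancel_left₀ hq.ne']
  simp only [cfDenom, cfMatrix_cons_apply_one]
  ring_nf

lemma cfApprox_eq_cfMap (n : ℕ) (a : ℕ → ℕ+) :
    cfApprox n a = cfMap (List.ofFn fun k : Fin n => a k) 0 := by
  induction n generalizing a with
  | zero => rfl
  | succ n ih => simp [cfApprox, ih, List.ofFn_succ]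

lemma cauchySeq_cfApprox (a : ℕ → ℕ+) : CauchySeq fun n => cfApprox n a := by
  refine cauchySeq_of_le_geometric 2⁻¹ 1 (by norm_num) fun n => ?_
  have h₀ : (0 : ℝ) ≤ cfMap [a n] 0 := cfMap_nonneg _ le_rfl
  have h₁ : cfMap [a n] 0 ≤ 1 := by
    simpa using inv_le_one_of_one_le₀ (Nat.one_le_cast.mpr (a n).pos : (1 : ℝ) ≤ a n)
  rw [dist_comm, Real.dist_eq, cfApprox_eq_cfMap, cfApprox_eq_cfMap, List.ofFn_succ_last,
    cfMap_append, one_mul]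
  calc _ ≤ cylinderLength (List.ofFn fun k : Fin n => a k) := abs_cfMap_sub_cfMap_zero_le _ h₀ h₁
    _ ≤ 2⁻¹ ^ n := by simpa using cylinderLength_le (List.ofFn fun k : Fin n => a k)

lemma tendsto_cfApprox (a : ℕ → ℕ+) : Tendsto (fun n => cfApprox n a) atTop (𝓝 (cfVal a)) :=
  (cauchySeq_cfApprox a).tendsto_limUnder

lemma cfVal_nonneg (a : ℕ → ℕ+) : 0 ≤ cfVal a :=
  ge_of_tendsto' (tendsto_cfApprox a) fun n => by
    rw [cfApprox_eq_cfMap]; exact cfMap_nonneg _ le_rfl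

lemma cfVal_eq_inv (a : ℕ → ℕ+) : cfVal a = ((a 0 : ℝ) + cfVal fun k => a (k + 1))⁻¹ := by
  have hne : (a 0 : ℝ) + cfVal (fun k => a (k + 1)) ≠ 0 :=
    (add_pos_of_pos_of_nonneg (by positivity) (cfVal_nonneg _)).ne'
  exact tendsto_nhds_unique ((tendsto_cfApprox a).comp (tendsto_add_atTop_nat 1))
    (((tendsto_cfApprox _).const_add _).inv₀ hne)

lemma cfVal_pos (a : ℕ → ℕ+) : 0 < cfVal a := by
  rw [cfVal_eq_inv]
  have := cfVal_nonneg fun k => a (k + 1)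
  positivity

lemma cfVal_lt_one (a : ℕ → ℕ+) : cfVal a < 1 := by
  rw [cfVal_eq_inv]
  exact inv_lt_one_of_one_lt₀ (lt_add_of_le_of_pos (Nat.one_le_cast.mpr (a 0).pos) (cfVal_pos _))

lemma gaussMap_cfVal (a : ℕ → ℕ+) : gaussMap (cfVal a) = cfVal fun k => a (k + 1) := by
  rw [gaussMap, if_neg (cfVal_pos a).ne', cfVal_eq_inv a, inv_inv, add_comm,
    Int.fract_add_natCast, Int.fract_eq_self.2 ⟨cfVal_nonneg _, cfVal_lt_one _⟩]

lemma iterate_gaussMap_cfVal (k : ℕ) (a : ℕ → ℕ+) :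
    gaussMap^[k] (cfVal a) = cfVal fun j => a (j + k) := by
  induction k generalizing a with
  | zero => rfl
  | succ k ih => rw [Function.iterate_succ_apply, gaussMap_cfVal, ih]; rfl

lemma cfVal_eq_cfMap (n : ℕ) (a : ℕ → ℕ+) :
    cfVal a = cfMap (List.ofFn fun k : Fin n => a k) (cfVal fun j => a (j + n)) := by
  induction n generalizing a with
  | zero => rfl
  | succ n ih => rw [cfVal_eq_inv, ih, List.ofFn_succ, cfMap_cons]; rfl

lemma prod_cfVal_shift (n : ℕ) (a : ℕ → ℕ+) :
    ∏ k ∈ Finset.range n, cfVal (fun j => a (j + k))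
      = (cfDenom (List.ofFn fun k : Fin n => a k) (cfVal fun j => a (j + n)))⁻¹ := by
  induction n generalizing a with
  | zero => simp [cfDenom, cfMatrix]
  | succ n ih =>
    simp_rw [Finset.prod_range_succ', ← add_assoc, add_zero]
    rw [ih fun k => a (k + 1), cfVal_eq_cfMap (n + 1) a, List.ofFn_succ]
    exact inv_cfDenom_mul_cfMap_cons _ _ (cfVal_nonneg _)

lemma perExt_add {n : ℕ} (i : Fin n → ℕ+) (k : ℕ) : perExt n i (k + n) = perExt n i k := by
  unfold perExt
  split_ifs <;> simp

lemma perExt_apply_fin {n : ℕ} (i : Fin n → ℕ+) (k : Fin n) : perExt n i k = i k := by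
  simp [perExt, k.pos, Nat.mod_eq_of_lt k.isLt]

lemma prod_sq_iterate_gaussMap_perExt (n : ℕ) (i : Fin n → ℕ+) :
    ∏ k ∈ Finset.range n, (gaussMap^[k] (cfVal (perExt n i))) ^ 2
      = (cfDenom (List.ofFn i) (cfVal (perExt n i)) ^ 2)⁻¹ := by
  simp_rw [iterate_gaussMap_cfVal, Finset.prod_pow, prod_cfVal_shift, perExt_add, perExt_apply_fin,
    inv_pow]

/-- `|(Tⁿ)'(z)|⁻¹ = ∏_{k<n} (T^k z)²`, since `T'(x) = -x⁻²`. -/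
theorem pressure_neg_log_deriv_eq_zero :
    Filter.Tendsto (fun n : ℕ =>
      ((n : ℝ))⁻¹ * Real.log (∑' i : Fin n → ℕ+,
        ∏ k ∈ Finset.range n, (gaussMap^[k] (cfVal (perExt n i))) ^ 2))
      Filter.atTop (nhds 0) := by
  refine tendsto_inv_mul_log_of_mem_Icc (a := 2⁻¹) (b := 2) (by norm_num) ?_
  refine Eventually.of_forall fun n => ?_
  refine tsum_mem_Icc_of_hasSum_one two_pos (hasSum_cylinderLength n) (fun i => by positivity)
    (fun i => ?_) (fun i => ?_) <;> rw [prod_sq_iterate_gaussMap_perExt]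
  · exact inv_cfDenom_sq_le _ (cfVal_nonneg _)
  · exact cylinderLength_le_inv_cfDenom_sq _ (cfVal_nonneg _) (cfVal_lt_one _).le
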